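/- The ordering on finite strictly increasing sequences of ordinals (σ < τ iff τ extends σ by a prefix, or τ and σ share a terminal segment preceded by entries ν < ν' respectively) is well-founded on any set of such sequences all of whose entries are bounded by a fixed ordinal θ; hence it is a well-ordering of that set. -/

import Mathlib

/-- The ordering on finite sequences of ordinals: `σ < τ` iff `τ` extends `σ` by a nonempty
prefix, or `σ` and `τ` share a common terminal segment preceded by entries `ν < ν'`
respectively. -/
def SeqLT (σ τ : List Ordinal) : Prop :=
  (∃ τ₀ : List Ordinal, τ₀ ≠ [] ∧ τ = τ₀ ++ σ) ∨
  (∃ (σ₀ τ₀ σ₁ : List Ordinal) (ν ν' : Ordinal), ν < ν' ∧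
      σ = σ₀ ++ ν :: σ₁ ∧ τ = τ₀ ++ ν' :: σ₁)

/-!
Read from the right, a sequence is compared with `SeqLT` exactly as in the lexicographic order
of the reversed lists, and reversing a strictly increasing sequence gives a strictly decreasing
one. The lexicographic order on decreasing chains of a well-founded relation is well-founded
(`WellFounded.list_chain'`), and the lexicographic order on lists of ordinals is total.
-/

namespace List

theorem lex_iff_exists_append {α : Type*} {r : α → α → Prop} {l m : List α} :
    Lex r l m ↔ (∃ t, t ≠ [] ∧ m = l ++ t) ∨
      ∃ (p a b : List α) (x y : α), r x y ∧ l = p ++ x :: a ∧ m = p ++ y :: b := by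
  constructor
  · intro h
    induction h with
    | @nil b m => exact .inl ⟨b :: m, cons_ne_nil _ _, rfl⟩
    | @cons c l m _ ih =>
      rcases ih with ⟨t, ht, rfl⟩ | ⟨p, a, b, x, y, hxy, rfl, rfl⟩
      · exact .inl ⟨t, ht, rfl⟩
      · exact .inr ⟨c :: p, a, b, x, y, hxy, rfl, rfl⟩
    | @rel x a y b hxy => exact .inr ⟨[], a, b, x, y, hxy, rfl, rfl⟩
  · rintro (⟨_ | ⟨c, t⟩, ht, rfl⟩ | ⟨p, a, b, x, y, hxy, rfl, rfl⟩)
    · exact absurd rfl ht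
    · simpa using Lex.append_left r (Lex.nil (a := c) (l := t)) l
    · exact Lex.append_left r (Lex.rel hxy) p

end List

theorem seqLT_iff_lex_reverse {σ τ : List Ordinal} :
    SeqLT σ τ ↔ List.Lex (· < ·) σ.reverse τ.reverse := by
  rw [List.lex_iff_exists_append]
  constructor
  · rintro (⟨τ₀, hτ₀, rfl⟩ | ⟨σ₀, τ₀, σ₁, ν, ν', hν, rfl, rfl⟩)
    · exact .inl ⟨τ₀.reverse, by simpa using hτ₀, by simp⟩
    · exact .inr ⟨σ₁.reverse, σ₀.reverse, τ₀.reverse, ν, ν', hν, by simp, by simp⟩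
  · rintro (⟨t, ht, hτ⟩ | ⟨p, a, b, x, y, hxy, hσ, hτ⟩)
    · rw [List.reverse_eq_append_iff] at hτ
      exact .inl ⟨t.reverse, by simpa using ht, by simpa using hτ⟩
    · rw [List.reverse_eq_append_iff] at hσ hτ
      exact .inr ⟨a.reverse, b.reverse, p.reverse, x, y, hxy, by simpa using hσ, by simpa using hτ⟩

/-- On the set of finite strictly increasing sequences of ordinals all of whose entries
are bounded by a fixed ordinal `θ`, the ordering `SeqLT` is well-founded; together with
trichotomy this makes it a well-ordering of that set. -/
theorem seqLT_wellFounded (θ : Ordinal) :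
    WellFounded (fun σ τ : {l : List Ordinal // l.Chain' (· < ·) ∧ ∀ x ∈ l, x < θ} =>
      SeqLT σ.1 τ.1) ∧
    (∀ σ τ : {l : List Ordinal // l.Chain' (· < ·) ∧ ∀ x ∈ l, x < θ},
      SeqLT σ.1 τ.1 ∨ σ = τ ∨ SeqLT τ.1 σ.1) := by
  refine ⟨?_, fun σ τ => ?_⟩
  · have hwf := InvImage.wf
      (fun σ : {l : List Ordinal // l.Chain' (· < ·) ∧ ∀ x ∈ l, x < θ} =>
        (⟨σ.1.reverse, List.isChain_reverse.mpr σ.2.1⟩ : List.chains (· < ·)))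
      (WellFounded.list_chain' Ordinal.lt_wf)
    exact Subrelation.wf (seqLT_iff_lex_reverse.mp ·) hwf
  · rw [seqLT_iff_lex_reverse, seqLT_iff_lex_reverse, ← Subtype.val_inj, ← List.reverse_inj]
    exact trichotomous_of _ _ _
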